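/- Let s ∈ ℝ. Let X, Y, Z be real-valued random variables on a probability space with X + Y = Z almost surely and X ≥ s almost surely. Let Y', Z' be real-valued random variables on a (possibly different) probability space with s + Y' = Z' almost surely. If Y has the same distribution as Y' and Z has the same distribution as Z', then X = s almost surely. -/

import Mathlib

open MeasureTheory

/-! Almost surely `s + Y ≤ Z`, and `s + Y` has the law of `s + Y'`, i.e. of `Z'`, i.e. of `Z`.
A random variable dominated almost surely by another one with the same law equals it almost
surely: the gap `arctan Z - arctan (s + Y)` is nonnegative and, `arctan` being bounded, has
mean `E[arctan Z] - E[arctan (s + Y)] = 0`. -/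

theorem integrable_arctan_comp {Ω : Type*} [MeasurableSpace Ω] {P : Measure Ω}
    [IsFiniteMeasure P] {W : Ω → ℝ} (hW : AEMeasurable W P) :
    Integrable (fun ω ↦ Real.arctan (W ω)) P :=
  Integrable.of_bound (Real.continuous_arctan.comp_aestronglyMeasurable hW.aestronglyMeasurable)
    (Real.pi / 2) <| Filter.Eventually.of_forall fun _ ↦ by
      rw [Real.norm_eq_abs, abs_le]
      exact ⟨(Real.neg_pi_div_two_lt_arctan _).le, (Real.arctan_lt_pi_div_two _).le⟩

theorem ae_eq_of_ae_le_of_map_eq {Ω : Type*} [MeasurableSpace Ω] {P : Measure Ω}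
    [IsFiniteMeasure P] {U V : Ω → ℝ} (hU : AEMeasurable U P) (hV : AEMeasurable V P)
    (hle : U ≤ᵐ[P] V) (hmap : P.map U = P.map V) : U =ᵐ[P] V := by
  have hgap : 0 ≤ᵐ[P] fun ω ↦ Real.arctan (V ω) - Real.arctan (U ω) := by
    filter_upwards [hle] with ω h
    exact sub_nonneg.2 (Real.arctan_mono h)
  have hmean : ∫ ω, Real.arctan (V ω) - Real.arctan (U ω) ∂P = 0 := by
    rw [integral_sub (integrable_arctan_comp hV) (integrable_arctan_comp hU),
      ← integral_map hV Real.continuous_arctan.aestronglyMeasurable,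
      ← integral_map hU Real.continuous_arctan.aestronglyMeasurable, hmap, sub_self]
  have hgap_int := (integrable_arctan_comp hV).sub (integrable_arctan_comp hU)
  filter_upwards [(integral_eq_zero_iff_of_nonneg_ae hgap hgap_int).1 hmean] with ω h
  exact (Real.arctan_injective (sub_eq_zero.1 h)).symm

theorem stmt_5_general {Ω Ω' : Type*} [MeasurableSpace Ω] [MeasurableSpace Ω']
    (P : Measure Ω) [IsProbabilityMeasure P] (P' : Measure Ω') [IsProbabilityMeasure P']
    (s : ℝ) (X Y Z : Ω → ℝ) (Y' Z' : Ω' → ℝ)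
    (hY : Measurable Y) (hZ : Measurable Z)
    (hY' : Measurable Y')
    (hXYZ : ∀ᵐ ω ∂P, X ω + Y ω = Z ω)
    (hXs : ∀ᵐ ω ∂P, s ≤ X ω)
    (hYZ' : ∀ᵐ ω ∂P', s + Y' ω = Z' ω)
    (hYY' : P.map Y = P'.map Y')
    (hZZ' : P.map Z = P'.map Z') :
    ∀ᵐ ω ∂P, X ω = s := by
  have hshift : Measurable (s + · : ℝ → ℝ) := measurable_const_add s
  have hlaw : P.map (fun ω ↦ s + Y ω) = P.map Z :=
    calc P.map (fun ω ↦ s + Y ω) = (P'.map Y').map (s + ·) := by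
          rw [← hYY', Measure.map_map hshift hY]; rfl
      _ = P'.map Z' := by
          rw [Measure.map_map hshift hY']
          exact Measure.map_congr hYZ'
      _ = P.map Z := hZZ'.symm
  have hle : (fun ω ↦ s + Y ω) ≤ᵐ[P] Z := by
    filter_upwards [hXYZ, hXs] with ω h1 h2
    linarith
  filter_upwards [ae_eq_of_ae_le_of_map_eq (hY.const_add s).aemeasurable hZ.aemeasurable hle hlaw,
    hXYZ] with ω h1 h2
  linarith

/-- If `X + Y = Z` a.s. and `X ≥ s` a.s. on one probability space, `s + Y' = Z'` a.s.
on another, and `Y ≍ Y'`, `Z ≍ Z'` in distribution, then `X = s` a.s. -/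
theorem stmt_5 {Ω Ω' : Type*} [MeasurableSpace Ω] [MeasurableSpace Ω']
    (P : Measure Ω) [IsProbabilityMeasure P] (P' : Measure Ω') [IsProbabilityMeasure P']
    (s : ℝ) (X Y Z : Ω → ℝ) (Y' Z' : Ω' → ℝ)
    (hX : Measurable X) (hY : Measurable Y) (hZ : Measurable Z)
    (hY' : Measurable Y') (hZ' : Measurable Z')
    (hXYZ : ∀ᵐ ω ∂P, X ω + Y ω = Z ω)
    (hXs : ∀ᵐ ω ∂P, s ≤ X ω)
    (hYZ' : ∀ᵐ ω ∂P', s + Y' ω = Z' ω)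
    (hYY' : P.map Y = P'.map Y')
    (hZZ' : P.map Z = P'.map Z') :
    ∀ᵐ ω ∂P, X ω = s :=
  stmt_5_general P P' s X Y Z Y' Z' hY hZ hY' hXYZ hXs hYZ' hYY' hZZ'
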